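/- Let G be a connected k-regular graph on n ≥ 5 vertices with k ≥ 2, and define the sequence R^(1)(G) = R(G) and R^(m)(G) = R(R^(m-1)(G)) for m ≥ 2, where R(H) = L(L(H)^c)^c. Then for every m ≥ 1, R^(m)(G) is a Ramanujan graph with diameter at most 3. -/

import Mathlib

open SimpleGraph Polynomial

noncomputable instance {V : Type*} [Finite V] {G : SimpleGraph V} {v : V} :
    Fintype (G.neighborSet v) := Fintype.ofFinite _

/-- The operation `R(G) = L(L(G)ᶜ)ᶜ`. -/
def RGraph {V : Type*} (G : SimpleGraph V) :
    SimpleGraph ((G.lineGraph)ᶜ.edgeSet) :=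
  ((G.lineGraph)ᶜ.lineGraph)ᶜ

/-- Adjacency matrix over `ℝ` of a graph on a finite vertex type. -/
noncomputable def adjM {V : Type*} [Fintype V] (G : SimpleGraph V) : Matrix V V ℝ :=
  letI := Classical.decRel G.Adj
  G.adjMatrix ℝ

/-- Characteristic polynomial of the adjacency matrix. -/
noncomputable def cpoly {V : Type*} [Finite V] (G : SimpleGraph V) : Polynomial ℝ :=
  letI := Fintype.ofFinite V
  letI := Classical.decEq V
  (adjM G).charpoly

/-- `μ` is an eigenvalue of the adjacency matrix of `G`. -/
def IsEigval {V : Type*} [Finite V] (G : SimpleGraph V) (μ : ℝ) : Prop :=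
  letI := Fintype.ofFinite V
  ∃ v : V → ℝ, v ≠ 0 ∧ (adjM G).mulVec v = μ • v

/-- `μ` is the second largest (distinct) eigenvalue of `G`. -/
def IsSecondLargestEigval {V : Type*} [Finite V] (G : SimpleGraph V) (μ : ℝ) : Prop :=
  IsEigval G μ ∧ ∃ ν : ℝ, IsEigval G ν ∧ μ < ν ∧
    ∀ ρ : ℝ, IsEigval G ρ → ρ = ν ∨ ρ ≤ μ

/-- `μ` is the smallest eigenvalue of `G`. -/
def IsSmallestEigval {V : Type*} [Finite V] (G : SimpleGraph V) (μ : ℝ) : Prop :=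
  IsEigval G μ ∧ ∀ ρ : ℝ, IsEigval G ρ → μ ≤ ρ

/-- `H` is a Ramanujan graph of degree `d`. -/
def IsRamanujan {V : Type*} [Finite V] (H : SimpleGraph V) (d : ℕ) : Prop :=
  H.Connected ∧ H.IsRegularOfDegree d ∧
    ∀ μ : ℝ, IsEigval H μ → |μ| ≠ (d : ℝ) → |μ| ≤ 2 * Real.sqrt (d - 1)

/-- A finite vertex type bundled with a simple graph on it. -/
structure FinGraph where
  carrier : Type
  [fin : Finite carrier]
  graph : SimpleGraph carrier

attribute [instance] FinGraph.fin

/-- One application of the operation `R`. -/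
def RStep (p : FinGraph) : FinGraph := ⟨_, RGraph p.graph⟩

/-- The iterated operation `R^(m)(G)`. -/
def Rit {V : Type} [Finite V] (G : SimpleGraph V) (m : ℕ) : FinGraph :=
  RStep^[m] ⟨V, G⟩

/-!
Write `H = L(G)ᶜ`, so that `R(G) = L(H)ᶜ`, and let `B` be the vertex-edge incidence matrix of a
graph `X`. Since `BᵀB = A(L(X)) + 2` is positive semidefinite, every eigenvalue of a line graph is
at least `-2`; if `X` is `k`-regular, `BBᵀ = A(X) + k` turns an eigenvector `w ⊥ 𝟙` of `A(L(X))`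
with eigenvalue `θ ≠ -2` into the eigenvector `Bw ⊥ 𝟙` of `A(X)` with eigenvalue `θ + 2 - k`.
On `𝟙^⊥` the complement of a regular graph acts as `-1 - A(X)`.

Hence the eigenvalues of the `r`-regular graph `H` on `𝟙^⊥` are at most `1`, and an eigenvalue `μ`
of `R(G)` on `𝟙^⊥` satisfies `μ ≤ 1` (from the eigenvalue `-1 - μ ≥ -2` of `L(H)`) and `μ ≥ -r`
(from the eigenvalue `1 - μ - r ≤ 1` of `H`). So `|μ| ≤ r ≤ 2√(d - 1)` for the degree `d` of `R(G)`.
Two distinct edges of `H` sharing a vertex are both disjoint from some third edge, as the edges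
meeting their three endpoints are fewer than all edges; so `R(G)` has diameter at most `2`. Since
`R(G)` is again regular of degree at least `2` on at least `5` vertices, the argument iterates.
-/

open Finset Matrix

theorem isEigval_iff {V : Type*} [Fintype V] {G : SimpleGraph V} [DecidableRel G.Adj] {μ : ℝ} :
    IsEigval G μ ↔ ∃ v, v ≠ 0 ∧ G.adjMatrix ℝ *ᵥ v = μ • v := by
  unfold IsEigval adjM
  convert Iff.rfl

theorem Matrix.PosSemidef.nonneg_of_mulVec_eq_smul {n : Type*} [Fintype n]
    {M : Matrix n n ℝ} (hM : M.PosSemidef) {v : n → ℝ} {μ : ℝ} (hv : v ≠ 0)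
    (h : M *ᵥ v = μ • v) : 0 ≤ μ := by
  have hpos : 0 < v ⬝ᵥ v := by simpa using Matrix.dotProduct_star_self_pos_iff.mpr hv
  have := hM.dotProduct_mulVec_nonneg v
  rw [h, star_trivial, dotProduct_smul, smul_eq_mul] at this
  exact (mul_nonneg_iff_of_pos_right hpos).mp this

namespace SimpleGraph

section Regular

variable {V : Type*} [Fintype V] {G : SimpleGraph V} [DecidableRel G.Adj]

theorem sum_adjMatrix_mulVec_of_regular {d : ℕ} (hG : G.IsRegularOfDegree d) (v : V → ℝ) :
    ∑ a, (G.adjMatrix ℝ *ᵥ v) a = d * ∑ a, v a := by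
  -- `hG` is stated with the `Fintype (G.neighborSet v)` instance declared above, not Mathlib's;
  -- `convert` bridges the two here and below.
  have hconst : G.adjMatrix ℝ *ᵥ 1 = fun _ => (d : ℝ) := funext fun b => by
    simpa using adjMatrix_mulVec_const_apply_of_regular (α := ℝ) (a := 1) (by convert hG) (v := b)
  calc ∑ a, (G.adjMatrix ℝ *ᵥ v) a = 1 ⬝ᵥ (G.adjMatrix ℝ *ᵥ v) := by simp [dotProduct]
    _ = (G.adjMatrix ℝ *ᵥ 1) ⬝ᵥ v := by
      rw [dotProduct_mulVec, ← mulVec_transpose, transpose_adjMatrix]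
    _ = d * ∑ a, v a := by rw [hconst]; simp [dotProduct, Finset.mul_sum]

theorem eq_or_sum_eq_zero_of_adjMatrix_mulVec_eq_smul {d : ℕ} (hG : G.IsRegularOfDegree d)
    {v : V → ℝ} {μ : ℝ} (h : G.adjMatrix ℝ *ᵥ v = μ • v) : μ = d ∨ ∑ a, v a = 0 := by
  have := sum_adjMatrix_mulVec_of_regular hG v
  rw [h] at this
  simp only [Pi.smul_apply, smul_eq_mul, ← Finset.mul_sum] at this
  rcases eq_or_ne (∑ a, v a) 0 with hs | hs
  · exact .inr hs
  · exact .inl (mul_right_cancel₀ hs this)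

theorem IsRegularOfDegree.two_mul_card_edgeSet {d : ℕ} (hG : G.IsRegularOfDegree d) :
    2 * Fintype.card G.edgeSet = Fintype.card V * d := by
  rw [← edgeFinset_card, ← sum_degrees_eq_twice_card_edges, Finset.sum_const_nat fun v _ => ?_,
    Finset.card_univ]
  convert hG v

variable [DecidableEq V]

theorem compl_adjMatrix_mulVec_apply (v : V → ℝ) (a : V) :
    (Gᶜ.adjMatrix ℝ *ᵥ v) a = ∑ b, v b - v a - (G.adjMatrix ℝ *ᵥ v) a := by
  have h := G.one_add_adjMatrix_add_compl_adjMatrix_eq_of_one (α := ℝ)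
  rw [compl_adjMatrix_eq_adjMatrix_compl] at h
  rw [show Gᶜ.adjMatrix ℝ = of 1 - 1 - G.adjMatrix ℝ by rw [← h]; abel, sub_mulVec, sub_mulVec,
    one_mulVec]
  simp [mulVec, dotProduct]

theorem adjMatrix_mulVec_eq_smul_of_compl {v : V → ℝ} {μ : ℝ} (hv : ∑ a, v a = 0)
    (h : Gᶜ.adjMatrix ℝ *ᵥ v = μ • v) : G.adjMatrix ℝ *ᵥ v = (-1 - μ) • v := by
  funext a
  have := compl_adjMatrix_mulVec_apply (G := G) v a
  rw [h, hv] at this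
  simp only [Pi.smul_apply, smul_eq_mul] at this ⊢
  linarith

end Regular

def edgeIncMatrix {V : Type*} [DecidableEq V] (G : SimpleGraph V) (R : Type*) [Zero R] [One R] :
    Matrix V G.edgeSet R :=
  of fun a e => if a ∈ (e : Sym2 V) then 1 else 0

theorem card_filter_mem_and_mem_of_ne {V : Type*} [Fintype V] [DecidableEq V] {G : SimpleGraph V}
    [DecidableRel G.lineGraph.Adj] {e f : G.edgeSet} (hef : e ≠ f) :
    #{a | a ∈ (e : Sym2 V) ∧ a ∈ (f : Sym2 V)} = if G.lineGraph.Adj e f then 1 else 0 := by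
  split_ifs with hadj
  · obtain ⟨-, v, hve, hvf⟩ := lineGraph_adj_iff_exists.mp hadj
    refine Finset.card_eq_one.mpr ⟨v, Finset.eq_singleton_iff_unique_mem.mpr ⟨by simp [hve, hvf],
      fun a ha => ?_⟩⟩
    by_contra hav
    simp only [Finset.mem_filter, Finset.mem_univ, true_and] at ha
    exact hef (Subtype.ext (Sym2.eq_of_ne_mem hav ha.1 hve ha.2 hvf))
  · exact Finset.card_eq_zero.mpr (Finset.filter_eq_empty_iff.mpr fun a _ ha =>
      hadj (lineGraph_adj_iff_exists.mpr ⟨hef, a, ha⟩))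

section LineGraph

variable {V : Type*} {G : SimpleGraph V} [DecidableRel G.Adj] {R : Type*} [Semiring R]

theorem sum_edgeSet_eq_sum_sym2 [Fintype V] {M : Type*} [AddCommMonoid M] {f : Sym2 V → M}
    (hf : ∀ e ∉ G.edgeSet, f e = 0) : ∑ e : G.edgeSet, f e = ∑ e : Sym2 V, f e := by
  rw [← Finset.sum_subtype G.edgeFinset (fun _ => mem_edgeFinset) f]
  exact Finset.sum_subset (Finset.subset_univ _) fun e _ he => hf e (by simpa using he)

theorem edgeIncMatrix_apply_eq_incMatrix [DecidableEq V] (a : V) (e : G.edgeSet) :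
    G.edgeIncMatrix R a e = G.incMatrix R a e := by
  simp [edgeIncMatrix, incMatrix_apply', incidenceSet, e.2]

variable [Fintype V] [DecidableEq V]

theorem sum_edgeIncMatrix_apply_left (e : G.edgeSet) : ∑ a, G.edgeIncMatrix R a e = 2 := by
  simp only [edgeIncMatrix_apply_eq_incMatrix]
  exact G.sum_incMatrix_apply_of_mem_edgeSet e.2

theorem sum_edgeIncMatrix_apply_right (a : V) :
    ∑ e, G.edgeIncMatrix R a e = G.degree a := by
  simp only [edgeIncMatrix_apply_eq_incMatrix, ← sum_incMatrix_apply]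
  exact sum_edgeSet_eq_sum_sym2 (f := fun e => G.incMatrix R a e) fun e he =>
    G.incMatrix_of_notMem_incidenceSet fun h => he h.1

theorem edgeIncMatrix_mul_transpose :
    G.edgeIncMatrix R * (G.edgeIncMatrix R)ᵀ =
      G.adjMatrix R + diagonal fun a => (G.degree a : R) := by
  have h : G.adjMatrix R + diagonal (fun a => (G.degree a : R)) =
      of fun a b => if a = b then (G.degree a : R) else if G.Adj a b then 1 else 0 := by
    ext a b
    by_cases hab : a = b
    · subst hab; simp
    · simp [hab]
  rw [h, ← G.incMatrix_mul_transpose]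
  ext a b
  simp only [mul_apply, transpose_apply, edgeIncMatrix_apply_eq_incMatrix]
  exact sum_edgeSet_eq_sum_sym2 (f := fun e => G.incMatrix R a e * G.incMatrix R b e)
    fun e he => by simp [G.incMatrix_of_notMem_incidenceSet fun h : e ∈ G.incidenceSet a => he h.1]

theorem edgeIncMatrix_transpose_mul [DecidableRel G.lineGraph.Adj] :
    (G.edgeIncMatrix R)ᵀ * G.edgeIncMatrix R = G.lineGraph.adjMatrix R + (2 : R) • 1 := by
  ext e f
  simp only [mul_apply, transpose_apply, edgeIncMatrix, of_apply, ite_zero_mul_ite_zero, mul_one,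
    Finset.sum_boole, Matrix.add_apply, Matrix.smul_apply, one_apply, adjMatrix_apply, smul_eq_mul]
  by_cases hef : e = f
  · subst hef
    have := sum_edgeIncMatrix_apply_left (R := R) e
    simp only [edgeIncMatrix, of_apply, Finset.sum_boole] at this
    simp [this]
  · simp [hef, card_filter_mem_and_mem_of_ne hef, apply_ite (Nat.cast (R := R))]

theorem IsRegularOfDegree.lineGraph {d : ℕ} (hG : G.IsRegularOfDegree d) :
    G.lineGraph.IsRegularOfDegree (2 * d - 2) := by
  classical
  intro e
  -- `A(L) 𝟙 = BᵀB 𝟙 - 2 𝟙 = Bᵀ (d 𝟙) - 2 𝟙 = (2d - 2) 𝟙`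
  have hrow : G.edgeIncMatrix ℝ *ᵥ 1 = fun _ => (d : ℝ) := funext fun a => by
    simp [mulVec, dotProduct, sum_edgeIncMatrix_apply_right, hG a]
  have h := congrFun (congrArg (· *ᵥ (1 : G.edgeSet → ℝ)) (edgeIncMatrix_transpose_mul (G := G)
    (R := ℝ))) e
  simp only [← mulVec_mulVec, hrow, add_mulVec, Pi.add_apply, smul_mulVec, one_mulVec] at h
  have hdeg := adjMatrix_mulVec_const_apply (G := G.lineGraph) (α := ℝ) (a := 1) (v := e)
  simp [mulVec, dotProduct, ← Finset.sum_mul, sum_edgeIncMatrix_apply_left] at h hdeg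
  have hcard : #{f | G.lineGraph.Adj e f} + 2 = 2 * d := by exact_mod_cast h.symm
  have : G.lineGraph.degree e = #{f | G.lineGraph.Adj e f} := by convert hdeg.symm
  omega

variable [DecidableRel G.lineGraph.Adj]

theorem edgeIncMatrix_transpose_mul_mulVec {w : G.edgeSet → ℝ} {θ : ℝ}
    (h : G.lineGraph.adjMatrix ℝ *ᵥ w = θ • w) :
    ((G.edgeIncMatrix ℝ)ᵀ * G.edgeIncMatrix ℝ) *ᵥ w = (θ + 2) • w := by
  rw [edgeIncMatrix_transpose_mul, add_mulVec, h, smul_mulVec, one_mulVec, add_smul]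

theorem neg_two_le_of_lineGraph_adjMatrix_mulVec_eq_smul {w : G.edgeSet → ℝ} {θ : ℝ}
    (hw : w ≠ 0) (h : G.lineGraph.adjMatrix ℝ *ᵥ w = θ • w) : -2 ≤ θ := by
  have hM : ((G.edgeIncMatrix ℝ)ᵀ * G.edgeIncMatrix ℝ).PosSemidef := by
    simpa [conjTranspose_eq_transpose_of_trivial] using
      posSemidef_conjTranspose_mul_self (G.edgeIncMatrix ℝ)
  linarith [hM.nonneg_of_mulVec_eq_smul hw (edgeIncMatrix_transpose_mul_mulVec h)]

theorem exists_adjMatrix_mulVec_eq_smul_of_lineGraph {d : ℕ} (hG : G.IsRegularOfDegree d)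
    {w : G.edgeSet → ℝ} {θ : ℝ} (hw : w ≠ 0) (hθ : θ ≠ -2) (hs : ∑ e, w e = 0)
    (h : G.lineGraph.adjMatrix ℝ *ᵥ w = θ • w) :
    ∃ u : V → ℝ, u ≠ 0 ∧ ∑ a, u a = 0 ∧ G.adjMatrix ℝ *ᵥ u = (θ + 2 - d) • u := by
  set B := G.edgeIncMatrix ℝ
  have hBtu : Bᵀ *ᵥ (B *ᵥ w) = (θ + 2) • w := by
    rw [mulVec_mulVec, edgeIncMatrix_transpose_mul_mulVec h]
  refine ⟨B *ᵥ w, fun h0 => ?_, ?_, ?_⟩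
  · rw [h0, mulVec_zero, eq_comm, smul_eq_zero] at hBtu
    exact hBtu.elim (fun h2 => hθ (by linarith)) hw
  · simp only [mulVec, dotProduct]
    rw [Finset.sum_comm]
    simp [B, ← Finset.sum_mul, sum_edgeIncMatrix_apply_left, ← Finset.mul_sum, hs]
  · have hBBt : (B * Bᵀ) *ᵥ (B *ᵥ w) = (θ + 2) • (B *ᵥ w) := by
      rw [← mulVec_mulVec, hBtu, mulVec_smul]
    rw [edgeIncMatrix_mul_transpose, add_mulVec] at hBBt
    funext a
    have := congrFun hBBt a
    simp only [Pi.add_apply, mulVec_diagonal, hG a, Pi.smul_apply, smul_eq_mul] at this ⊢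
    linarith

end LineGraph

theorem ediam_le_two {α : Type*} {G : SimpleGraph α}
    (h : ∀ u v, u ≠ v → ¬G.Adj u v → ∃ w, G.Adj u w ∧ G.Adj w v) : G.ediam ≤ 2 := by
  refine ediam_le_of_edist_le fun u v => ?_
  by_cases huv : u = v
  · simp [huv]
  by_cases hadj : G.Adj u v
  · exact (edist_le_one_iff_adj_or_eq.mpr (.inl hadj)).trans (by norm_num)
  obtain ⟨w, huw, hwv⟩ := h u v huv hadj
  simpa using edist_le (huw.toWalk.append hwv.toWalk)

theorem connected_and_diam_le_two {α : Type*} [Nonempty α] {G : SimpleGraph α}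
    (h : ∀ u v, u ≠ v → ¬G.Adj u v → ∃ w, G.Adj u w ∧ G.Adj w v) :
    G.Connected ∧ G.diam ≤ 2 := by
  have hdiam := ediam_le_two h
  refine ⟨connected_of_ediam_ne_top (ne_top_of_le_ne_top (by decide) hdiam), ?_⟩
  simpa [diam] using ENat.toNat_le_toNat hdiam (by decide)

section ComplLineGraph

variable {V : Type*} {H : SimpleGraph V}

theorem compl_lineGraph_adj_iff {e f : H.edgeSet} :
    H.lineGraphᶜ.Adj e f ↔ ∀ a ∈ (e : Sym2 V), a ∉ (f : Sym2 V) := by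
  rw [compl_adj, lineGraph_adj_iff_exists]
  constructor
  · rintro ⟨hne, h⟩ a hae haf
    exact h ⟨hne, a, hae, haf⟩
  · refine fun h => ⟨fun hef => ?_, fun ⟨_, a, hae, haf⟩ => h a hae haf⟩
    exact h _ (Sym2.out_fst_mem _) (hef ▸ Sym2.out_fst_mem _)

variable [Fintype V] [DecidableEq V] [DecidableRel H.Adj]

theorem exists_edge_not_mem_of_adj_of_adj {r : ℕ} (hH : H.IsRegularOfDegree r)
    (hN : r + 3 ≤ Fintype.card V) {v x y : V} (hx : H.Adj v x) (hy : H.Adj v y) :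
    ∃ g ∈ H.edgeSet, v ∉ g ∧ x ∉ g ∧ y ∉ g := by
  have hx' : s(v, x) ∈ H.incidenceFinset x := by simp [incidenceSet, hx]
  have hy' : s(v, y) ∈ H.incidenceFinset y := by simp [incidenceSet, hy]
  have hT : #(H.incidenceFinset v ∪ (H.incidenceFinset x).erase s(v, x) ∪
      (H.incidenceFinset y).erase s(v, y)) + 2 ≤ 3 * r := by
    have := card_union_le (H.incidenceFinset v ∪ (H.incidenceFinset x).erase s(v, x))
      ((H.incidenceFinset y).erase s(v, y))
    have := card_union_le (H.incidenceFinset v) ((H.incidenceFinset x).erase s(v, x))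
    have := card_erase_of_mem hx'
    have := card_erase_of_mem hy'
    simp only [card_incidenceFinset_eq_degree, hH v, hH x, hH y] at *
    have : 1 ≤ r := hH v ▸ (H.degree_pos_iff_exists_adj v).mpr ⟨x, hx⟩
    omega
  set T := H.incidenceFinset v ∪ (H.incidenceFinset x).erase s(v, x) ∪
    (H.incidenceFinset y).erase s(v, y)
  -- `T`, the set of edges meeting `v`, `x` or `y`, is smaller than the `|V| r / 2` edges of `H`.
  obtain ⟨g, hgE, hgT⟩ : ∃ g ∈ H.edgeFinset, g ∉ T := by
    by_contra! hsub
    have := card_le_card (s := H.edgeFinset) (t := T) hsub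
    have hE := hH.two_mul_card_edgeSet
    rw [← edgeFinset_card] at hE
    nlinarith [Nat.mul_le_mul_right r hN, sq_nonneg ((r : ℤ) * 2 - 3)]
  have hg : g ∈ H.edgeSet := mem_edgeFinset.mp hgE
  have hvg : v ∉ g := fun h => hgT (by simp [T, incidenceSet, hg, h])
  refine ⟨g, hg, hvg, fun h => hgT ?_, fun h => hgT ?_⟩
  · have : g ≠ s(v, x) := by rintro rfl; simp at hvg
    simp [T, incidenceSet, hg, h, this]
  · have : g ≠ s(v, y) := by rintro rfl; simp at hvg
    simp [T, incidenceSet, hg, h, this]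

theorem compl_lineGraph_exists_common_adj {r : ℕ} (hH : H.IsRegularOfDegree r)
    (hN : r + 3 ≤ Fintype.card V) {e f : H.edgeSet} (hne : e ≠ f) (hnadj : ¬H.lineGraphᶜ.Adj e f) :
    ∃ g, H.lineGraphᶜ.Adj e g ∧ H.lineGraphᶜ.Adj g f := by
  obtain ⟨-, v, hve, hvf⟩ := lineGraph_adj_iff_exists.mp (by simpa [compl_adj, hne] using hnadj)
  obtain ⟨x, hex⟩ := Sym2.mem_iff_exists.mp hve
  obtain ⟨y, hfy⟩ := Sym2.mem_iff_exists.mp hvf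
  obtain ⟨g, hg, hvg, hxg, hyg⟩ := exists_edge_not_mem_of_adj_of_adj hH hN
    (H.mem_edgeSet.mp (hex ▸ e.2)) (H.mem_edgeSet.mp (hfy ▸ f.2))
  refine ⟨⟨g, hg⟩, compl_lineGraph_adj_iff.mpr ?_, (compl_lineGraph_adj_iff.mpr ?_).symm⟩
  · simp only [hex, Sym2.mem_iff]; rintro a (rfl | rfl) <;> assumption
  · simp only [hfy, Sym2.mem_iff]; rintro a (rfl | rfl) <;> assumption

theorem compl_lineGraph_connected_and_diam_le_two {r : ℕ} (hH : H.IsRegularOfDegree r)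
    (hr : 1 ≤ r) (hN : r + 3 ≤ Fintype.card V) :
    H.lineGraphᶜ.Connected ∧ H.lineGraphᶜ.diam ≤ 2 := by
  have : Nonempty H.edgeSet := Fintype.card_pos_iff.mp (by
    have := hH.two_mul_card_edgeSet
    nlinarith)
  exact connected_and_diam_le_two fun e f hne hnadj =>
    compl_lineGraph_exists_common_adj hH hN hne hnadj

end ComplLineGraph

section Spectrum

variable {V : Type*} [Fintype V] [DecidableEq V] {H : SimpleGraph V} [DecidableRel H.Adj]
  [DecidableRel H.lineGraph.Adj]

theorem le_one_of_compl_lineGraph_adjMatrix_mulVec_eq_smul {u : H.edgeSet → ℝ} {μ : ℝ}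
    (hu : u ≠ 0) (hs : ∑ e, u e = 0) (h : H.lineGraphᶜ.adjMatrix ℝ *ᵥ u = μ • u) : μ ≤ 1 := by
  linarith [neg_two_le_of_lineGraph_adjMatrix_mulVec_eq_smul hu
    (adjMatrix_mulVec_eq_smul_of_compl hs h)]

theorem neg_le_and_le_one_of_compl_lineGraph_adjMatrix_mulVec_eq_smul {r : ℕ}
    (hH : H.IsRegularOfDegree r)
    (hsmall : ∀ (u : V → ℝ) (μ : ℝ), u ≠ 0 → ∑ a, u a = 0 → H.adjMatrix ℝ *ᵥ u = μ • u → μ ≤ 1)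
    {v : H.edgeSet → ℝ} {μ : ℝ} (hv : v ≠ 0) (hs : ∑ e, v e = 0)
    (h : H.lineGraphᶜ.adjMatrix ℝ *ᵥ v = μ • v) : -r ≤ μ ∧ μ ≤ 1 := by
  have hL := adjMatrix_mulVec_eq_smul_of_compl hs h
  have hθ := neg_two_le_of_lineGraph_adjMatrix_mulVec_eq_smul hv hL
  refine ⟨?_, by linarith⟩
  rcases eq_or_ne (-1 - μ) (-2) with hμ | hμ
  · linarith [r.cast_nonneg (α := ℝ)]
  · obtain ⟨u, hu, hus, hHu⟩ := exists_adjMatrix_mulVec_eq_smul_of_lineGraph hH hv hμ hs hL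
    linarith [hsmall u _ hu hus hHu]

theorem isRamanujan_compl_lineGraph {r : ℕ} (hH : H.IsRegularOfDegree r) (hr : 2 ≤ r)
    (hN : r + 3 ≤ Fintype.card V)
    (hsmall : ∀ (u : V → ℝ) (μ : ℝ), u ≠ 0 → ∑ a, u a = 0 → H.adjMatrix ℝ *ᵥ u = μ • u → μ ≤ 1) :
    IsRamanujan H.lineGraphᶜ (Fintype.card H.edgeSet - 1 - (2 * r - 2)) ∧
      H.lineGraphᶜ.diam ≤ 2 := by
  set d := Fintype.card H.edgeSet - 1 - (2 * r - 2)
  have hreg : H.lineGraphᶜ.IsRegularOfDegree d := by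
    convert IsRegularOfDegree.compl (G := H.lineGraph) (by convert hH.lineGraph)
  have hd : r * r + 4 ≤ 4 * d := by
    have hM := hH.two_mul_card_edgeSet
    have hNr : r * (r + 3) ≤ r * Fintype.card V := Nat.mul_le_mul_left r hN
    have hdM : d + 2 * r = Fintype.card H.edgeSet + 1 := by
      have : 5 * r ≤ 2 * Fintype.card H.edgeSet := by nlinarith
      omega
    nlinarith
  have hrd : (r : ℝ) ≤ 2 * √((d : ℝ) - 1) := by
    have : ((r : ℝ) / 2) ^ 2 ≤ (d : ℝ) - 1 := by
      have : ((r * r + 4 : ℕ) : ℝ) ≤ ((4 * d : ℕ) : ℝ) := by exact_mod_cast hd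
      push_cast at this
      nlinarith
    linarith [Real.le_sqrt_of_sq_le this]
  obtain ⟨hconn, hdiam⟩ := compl_lineGraph_connected_and_diam_le_two hH (by omega) hN
  refine ⟨⟨hconn, hreg, fun μ hμ hμd => ?_⟩, hdiam⟩
  obtain ⟨v, hv, h⟩ := isEigval_iff.mp hμ
  rcases eq_or_sum_eq_zero_of_adjMatrix_mulVec_eq_smul hreg h with rfl | hs
  · exact absurd (abs_of_nonneg d.cast_nonneg) hμd
  · obtain ⟨hlo, hhi⟩ :=
      neg_le_and_le_one_of_compl_lineGraph_adjMatrix_mulVec_eq_smul hH hsmall hv hs h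
    have : (1 : ℝ) ≤ r := by exact_mod_cast (by omega : 1 ≤ r)
    exact (abs_le.mpr ⟨hlo, by linarith⟩).trans hrd

end Spectrum

end SimpleGraph

theorem exists_isRamanujan_rGraph {V : Type*} [Finite V] {G : SimpleGraph V} {k : ℕ}
    (hk : 2 ≤ k) (hn : 5 ≤ Nat.card V) (hG : G.IsRegularOfDegree k) :
    ∃ d, 2 ≤ d ∧ 5 ≤ Nat.card G.lineGraphᶜ.edgeSet ∧ IsRamanujan (RGraph G) d ∧
      (RGraph G).diam ≤ 2 := by
  classical
  have := Fintype.ofFinite V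
  rw [Nat.card_eq_fintype_card] at hn
  rw [Nat.card_eq_fintype_card]
  have hN := hG.two_mul_card_edgeSet
  set N := Fintype.card G.edgeSet
  set r := N - 1 - (2 * k - 2) with hr
  have hH : G.lineGraphᶜ.IsRegularOfDegree r := by
    convert IsRegularOfDegree.compl (G := G.lineGraph) (by convert hG.lineGraph)
  have h5k : 5 * k ≤ 2 * N := by nlinarith
  have hM := hH.two_mul_card_edgeSet
  have h5r : 5 * r ≤ 2 * Fintype.card G.lineGraphᶜ.edgeSet := by nlinarith
  obtain ⟨hram, hdiam⟩ := isRamanujan_compl_lineGraph hH (by omega) (by omega)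
    fun u μ hu hs h => le_one_of_compl_lineGraph_adjMatrix_mulVec_eq_smul hu hs h
  exact ⟨_, by omega, by omega, hram, hdiam⟩

def FinGraph.Admissible (p : FinGraph) : Prop :=
  5 ≤ Nat.card p.carrier ∧ ∃ k, 2 ≤ k ∧ p.graph.IsRegularOfDegree k

theorem FinGraph.Admissible.rStep {p : FinGraph} (hp : p.Admissible) :
    (RStep p).Admissible ∧ (∃ d, IsRamanujan (RStep p).graph d) ∧ (RStep p).graph.diam ≤ 2 := by
  obtain ⟨hn, k, hk, hG⟩ := hp
  obtain ⟨d, hd, hM, hram, hdiam⟩ := exists_isRamanujan_rGraph hk hn hG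
  exact ⟨⟨hM, d, hd, hram.2.1⟩, ⟨d, hram⟩, hdiam⟩

theorem rit_succ {V : Type} [Finite V] (G : SimpleGraph V) (m : ℕ) :
    Rit G (m + 1) = RStep (Rit G m) :=
  Function.iterate_succ_apply' _ _ _

theorem admissible_rit {V : Type} [Finite V] {G : SimpleGraph V}
    (hG : (⟨V, G⟩ : FinGraph).Admissible) (m : ℕ) : (Rit G m).Admissible := by
  induction m with
  | zero => exact hG
  | succ m ih => rw [rit_succ]; exact ih.rStep.1

theorem stmt19_general {V : Type} [Fintype V] (G : SimpleGraph V) (k : ℕ)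
    (hn : 5 ≤ Fintype.card V) (hk : 2 ≤ k)
    (hreg : G.IsRegularOfDegree k) (m : ℕ) (hm : 1 ≤ m) :
    (∃ d : ℕ, IsRamanujan (Rit G m).graph d) ∧ (Rit G m).graph.diam ≤ 3 := by
  obtain ⟨m, rfl⟩ := Nat.exists_eq_add_of_le' hm
  have hG : (⟨V, G⟩ : FinGraph).Admissible := ⟨by rwa [Nat.card_eq_fintype_card], k, hk, hreg⟩
  obtain ⟨-, hram, hdiam⟩ := (admissible_rit hG m).rStep
  rw [rit_succ]
  exact ⟨hram, hdiam.trans (by norm_num)⟩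

theorem stmt19 {V : Type} [Fintype V] (G : SimpleGraph V) (k : ℕ)
    (hn : 5 ≤ Fintype.card V) (hk : 2 ≤ k) (hconn : G.Connected)
    (hreg : G.IsRegularOfDegree k) (m : ℕ) (hm : 1 ≤ m) :
    (∃ d : ℕ, IsRamanujan (Rit G m).graph d) ∧ (Rit G m).graph.diam ≤ 3 :=
  stmt19_general G k hn hk hreg m hm
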